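/- arXiv:2202.02143 — 5 statements merged into one kernel-verified Lean document; each statement's English description precedes it below -/
import Mathlib

section
/- Assume hypotheses (H1) and (H2). Then the function H is strictly decreasing on the interval (0, I_max]: for all I₁, I₂ with 0 < I₁ < I₂ ≤ I_max, one has H(I₁) > H(I₂). -/
/-- Under (H1) and (H2), H is strictly decreasing on (0, I_max]. -/
theorem stmt_1
    (b μ β α c γ : ℝ)
    (hb : 0 < b) (hμ : 0 < μ) (hβ : 0 < β) (hα : 0 < α) (hc : 0 < c) (hγ : 0 < γ)
    (f : ℝ → ℝ → ℝ) (k : ℝ → ℝ)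
    (hf_nonneg : ∀ S ≥ (0:ℝ), ∀ I ≥ (0:ℝ), 0 ≤ f S I)
    (hf0S : ∀ I ≥ (0:ℝ), f 0 I = 0)
    (hf0I : ∀ S ≥ (0:ℝ), f S 0 = 0)
    -- (H1)
    (H1a : ∀ I > (0:ℝ), StrictMonoOn (fun S => f S I) (Set.Ici (0:ℝ)))
    (H1b : ∀ S ≥ (0:ℝ), MonotoneOn (fun I => f S I) (Set.Ioi (0:ℝ)))
    -- (H2)
    (H2a : ∀ S ≥ (0:ℝ), BddAbove ((fun I => f S I / I) '' Set.Ioi (0:ℝ)) ∧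
      AntitoneOn (fun I => f S I / I) (Set.Ioi (0:ℝ)))
    (H2b : ∀ S ≥ (0:ℝ), Filter.Tendsto (fun I => f S I / I)
      (nhdsWithin 0 (Set.Ioi 0)) (nhds (k S)))
    (hk_cont : ContinuousOn k (Set.Ici (0:ℝ)))
    (hk_mono : MonotoneOn k (Set.Ici (0:ℝ))) :
    ∀ I₁ I₂ : ℝ, 0 < I₁ → I₁ < I₂ → I₂ ≤ b * α / ((μ + α) * (μ + c + γ)) →
      β * f (b / μ - (μ + α) * (μ + c + γ) * I₂ / (μ * α)) I₂ / I₂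
          - (μ + α) * (μ + c + γ) / α
        < β * f (b / μ - (μ + α) * (μ + c + γ) * I₁ / (μ * α)) I₁ / I₁
          - (μ + α) * (μ + c + γ) / α := by
  intro I₁ I₂ hI₁ h12 h2max
  have hA : 0 < (μ + α) * (μ + c + γ) := by positivity
  have hI₂ : 0 < I₂ := hI₁.trans h12
  set S₁ := b / μ - (μ + α) * (μ + c + γ) * I₁ / (μ * α) with hS1
  set S₂ := b / μ - (μ + α) * (μ + c + γ) * I₂ / (μ * α) with hS2
  have hAI : (μ + α) * (μ + c + γ) * I₂ ≤ b * α := by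
    rw [le_div_iff₀ hA] at h2max; nlinarith
  have hS2nn : (0:ℝ) ≤ S₂ := by
    rw [hS2, sub_nonneg, div_le_div_iff₀ (by positivity) hμ]
    nlinarith
  have hS12 : S₂ < S₁ := by
    rw [hS1, hS2, sub_lt_sub_iff_left, div_lt_div_iff₀ (by positivity) (by positivity)]
    nlinarith [mul_lt_mul_of_pos_left h12 hA, mul_pos hμ hα, mul_lt_mul_of_pos_right (mul_lt_mul_of_pos_left h12 hA) (mul_pos hμ hα)]
  have hS1nn : (0:ℝ) ≤ S₁ := hS2nn.trans hS12.le
  have step1 : f S₂ I₂ < f S₁ I₂ := H1a I₂ hI₂ hS2nn hS1nn hS12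
  have step2 : f S₁ I₂ / I₂ ≤ f S₁ I₁ / I₁ :=
    (H2a S₁ hS1nn).2 (Set.mem_Ioi.mpr hI₁) (Set.mem_Ioi.mpr hI₂) h12.le
  have h1 : β * f S₂ I₂ / I₂ < β * f S₁ I₂ / I₂ :=
    (div_lt_div_iff_of_pos_right hI₂).mpr (mul_lt_mul_of_pos_left step1 hβ)
  have h2 : β * f S₁ I₂ / I₂ ≤ β * f S₁ I₁ / I₁ := by
    rw [mul_div_assoc, mul_div_assoc]
    exact mul_le_mul_of_nonneg_left step2 hβ.le
  linarith
end

section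
/- Assume hypotheses (H1) and (H2). Then H(I) tends to (A/α)·(R₀ − 1) as I tends to 0 from the right; that is, the limit of H along the filter of positive reals approaching 0 equals β·k(S₀) − A/α = (A/α)·(R₀ − 1). -/
/-!
Along the line `S = S(I)` the point `S(I)` increases to `S₀` as `I → 0⁺`, so by monotonicity of
`f(·, I)` the quotient `f(S(I), I)/I` is squeezed between `f(S₁, I)/I` and `f(S₀, I)/I` for any
fixed `S₁ < S₀` and all small `I`. These two bounds tend to `k(S₁)` and `k(S₀)`, and `k(S₁)` is
as close to `k(S₀)` as we like by continuity of `k`.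
-/

open Filter Set Topology

theorem tendsto_diagonal_of_monotoneOn_of_tendsto_nhdsLE {ι : Type*} {l : Filter ι}
    {F : ℝ → ι → ℝ} {k : ℝ → ℝ} {σ : ι → ℝ} {m S₀ : ℝ} (hm : m < S₀)
    (hF : ∀ᶠ i in l, MonotoneOn (F · i) (Icc m S₀))
    (hlim : ∀ S ∈ Icc m S₀, Tendsto (F S) l (𝓝 (k S)))
    (hk : ContinuousWithinAt k (Iio S₀) S₀) (hσ : Tendsto σ l (𝓝[≤] S₀)) :
    Tendsto (fun i => F (σ i) i) l (𝓝 (k S₀)) := by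
  have hS₀ : S₀ ∈ Icc m S₀ := ⟨hm.le, le_rfl⟩
  rw [tendsto_order]
  constructor
  · intro a ha
    obtain ⟨S₁, haS₁, hmS₁, hS₁S₀⟩ : ∃ S₁, a < k S₁ ∧ m < S₁ ∧ S₁ < S₀ :=
      ((hk.eventually (eventually_gt_nhds ha)).and (Ioo_mem_nhdsLT hm)).exists
    have hS₁ : S₁ ∈ Icc m S₀ := ⟨hmS₁.le, hS₁S₀.le⟩
    filter_upwards [hF, (hlim S₁ hS₁).eventually (eventually_gt_nhds haS₁),
      hσ (Icc_mem_nhdsLE hS₁S₀)] with i hmono hlt hσi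
    exact hlt.trans_le (hmono hS₁ ⟨hmS₁.le.trans hσi.1, hσi.2⟩ hσi.1)
  · intro a ha
    filter_upwards [hF, (hlim S₀ hS₀).eventually (eventually_lt_nhds ha),
      hσ (Ioc_mem_nhdsLE hm)] with i hmono hlt hσi
    exact (hmono (Ioc_subset_Icc_self hσi) hS₀ hσi.2).trans_lt hlt

theorem tendsto_sub_mul_nhdsLE {S₀ a : ℝ} (ha : 0 ≤ a) :
    Tendsto (fun I : ℝ => S₀ - a * I) (𝓝[>] 0) (𝓝[≤] S₀) := by
  refine tendsto_nhdsWithin_iff.2 ⟨?_, ?_⟩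
  · have : Continuous (fun I : ℝ => S₀ - a * I) := by fun_prop
    simpa using this.continuousWithinAt.tendsto (s := Ioi 0) (x := 0)
  · filter_upwards [self_mem_nhdsWithin] with I (hI : 0 < I)
    exact sub_le_self S₀ (mul_nonneg ha hI.le)

theorem stmt_2_general
    (b μ β α c γ : ℝ)
    (hb : 0 < b) (hμ : 0 < μ) (hα : 0 < α) (hc : 0 < c) (hγ : 0 < γ)
    (f : ℝ → ℝ → ℝ) (k : ℝ → ℝ)
    -- (H1)
    (H1a : ∀ I > (0:ℝ), StrictMonoOn (fun S => f S I) (Set.Ici (0:ℝ)))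
    -- (H2)
    (H2b : ∀ S ≥ (0:ℝ), Filter.Tendsto (fun I => f S I / I)
      (nhdsWithin 0 (Set.Ioi 0)) (nhds (k S)))
    (hk_cont : ContinuousOn k (Set.Ici (0:ℝ))) :
    Filter.Tendsto
      (fun I : ℝ => β * f (b / μ - (μ + α) * (μ + c + γ) * I / (μ * α)) I / I
        - (μ + α) * (μ + c + γ) / α)
      (nhdsWithin 0 (Set.Ioi 0))
      (nhds (β * k (b / μ) - (μ + α) * (μ + c + γ) / α))
    ∧ β * k (b / μ) - (μ + α) * (μ + c + γ) / α
        = ((μ + α) * (μ + c + γ) / α)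
          * (β * α * k (b / μ) / ((μ + α) * (μ + c + γ)) - 1) := by
  set A := (μ + α) * (μ + c + γ)
  have hA : 0 < A := by positivity
  have hS₀ : 0 < b / μ := div_pos hb hμ
  have hmono : ∀ᶠ I in 𝓝[>] (0 : ℝ), MonotoneOn (fun S => f S I / I) (Icc 0 (b / μ)) := by
    filter_upwards [self_mem_nhdsWithin] with I (hI : 0 < I) S hS T hT hST
    exact div_le_div_of_nonneg_right
      ((H1a I hI).monotoneOn hS.1 hT.1 hST) hI.le
  have hk : ContinuousWithinAt k (Iio (b / μ)) (b / μ) :=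
    (hk_cont.continuousAt (Ici_mem_nhds hS₀)).continuousWithinAt
  have hσ : Tendsto (fun I => b / μ - A / (μ * α) * I) (𝓝[>] 0) (𝓝[≤] (b / μ)) :=
    tendsto_sub_mul_nhdsLE (by positivity)
  have key := tendsto_diagonal_of_monotoneOn_of_tendsto_nhdsLE hS₀ hmono
    (fun S hS => H2b S hS.1) hk hσ
  refine ⟨?_, by field_simp⟩
  convert (key.const_mul β).sub_const (A / α) using 2 with I
  ring_nf

/-- H(I) → (A/α)·(R₀ − 1) as I → 0⁺. -/
theorem stmt_2
    (b μ β α c γ : ℝ)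
    (hb : 0 < b) (hμ : 0 < μ) (hβ : 0 < β) (hα : 0 < α) (hc : 0 < c) (hγ : 0 < γ)
    (f : ℝ → ℝ → ℝ) (k : ℝ → ℝ)
    (hf_nonneg : ∀ S ≥ (0:ℝ), ∀ I ≥ (0:ℝ), 0 ≤ f S I)
    (hf0S : ∀ I ≥ (0:ℝ), f 0 I = 0)
    (hf0I : ∀ S ≥ (0:ℝ), f S 0 = 0)
    -- (H1)
    (H1a : ∀ I > (0:ℝ), StrictMonoOn (fun S => f S I) (Set.Ici (0:ℝ)))
    (H1b : ∀ S ≥ (0:ℝ), MonotoneOn (fun I => f S I) (Set.Ioi (0:ℝ)))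
    -- (H2)
    (H2a : ∀ S ≥ (0:ℝ), BddAbove ((fun I => f S I / I) '' Set.Ioi (0:ℝ)) ∧
      AntitoneOn (fun I => f S I / I) (Set.Ioi (0:ℝ)))
    (H2b : ∀ S ≥ (0:ℝ), Filter.Tendsto (fun I => f S I / I)
      (nhdsWithin 0 (Set.Ioi 0)) (nhds (k S)))
    (hk_cont : ContinuousOn k (Set.Ici (0:ℝ)))
    (hk_mono : MonotoneOn k (Set.Ici (0:ℝ))) :
    Filter.Tendsto
      (fun I : ℝ => β * f (b / μ - (μ + α) * (μ + c + γ) * I / (μ * α)) I / I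
        - (μ + α) * (μ + c + γ) / α)
      (nhdsWithin 0 (Set.Ioi 0))
      (nhds (β * k (b / μ) - (μ + α) * (μ + c + γ) / α))
    ∧ β * k (b / μ) - (μ + α) * (μ + c + γ) / α
        = ((μ + α) * (μ + c + γ) / α)
          * (β * α * k (b / μ) / ((μ + α) * (μ + c + γ)) - 1) :=
  stmt_2_general b μ β α c γ hb hμ hα hc hγ f k H1a H2b hk_cont
end

section
/- Assume hypotheses (H1) and (H2). Fix S > 0. Then for all I*, J > 0 the following inequality holds: −1 − f(S,J)/f(S,I*) − J/I* + (J/I*)·(f(S,I*)/f(S,J)) ≤ 0. -/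
/-- Under (H1) and (H2), for fixed S > 0 and all I*, J > 0:
−1 − f(S,J)/f(S,I*) − J/I* + (J/I*)·(f(S,I*)/f(S,J)) ≤ 0. -/
theorem stmt_7
    (f : ℝ → ℝ → ℝ) (k : ℝ → ℝ)
    (hf_nonneg : ∀ S ≥ (0:ℝ), ∀ I ≥ (0:ℝ), 0 ≤ f S I)
    (hf0S : ∀ I ≥ (0:ℝ), f 0 I = 0)
    (hf0I : ∀ S ≥ (0:ℝ), f S 0 = 0)
    -- (H1)
    (H1a : ∀ I > (0:ℝ), StrictMonoOn (fun S => f S I) (Set.Ici (0:ℝ)))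
    (H1b : ∀ S ≥ (0:ℝ), MonotoneOn (fun I => f S I) (Set.Ioi (0:ℝ)))
    -- (H2)
    (H2a : ∀ S ≥ (0:ℝ), BddAbove ((fun I => f S I / I) '' Set.Ioi (0:ℝ)) ∧
      AntitoneOn (fun I => f S I / I) (Set.Ioi (0:ℝ)))
    (H2b : ∀ S ≥ (0:ℝ), Filter.Tendsto (fun I => f S I / I)
      (nhdsWithin 0 (Set.Ioi 0)) (nhds (k S)))
    (hk_cont : ContinuousOn k (Set.Ici (0:ℝ)))
    (hk_mono : MonotoneOn k (Set.Ici (0:ℝ)))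
    (S : ℝ) (hS : 0 < S) :
    ∀ Istar J : ℝ, 0 < Istar → 0 < J →
      -1 - f S J / f S Istar - J / Istar + (J / Istar) * (f S Istar / f S J) ≤ 0 := by
  intro Istar J hI hJ
  have hA : 0 < f S Istar := by
    have h := H1a Istar hI (Set.mem_Ici.mpr le_rfl) (Set.mem_Ici.mpr hS.le) hS
    simpa [hf0S Istar hI.le] using h
  have hB : 0 < f S J := by
    have h := H1a J hJ (Set.mem_Ici.mpr le_rfl) (Set.mem_Ici.mpr hS.le) hS
    simpa [hf0S J hJ.le] using h
  rcases le_total J Istar with h | h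
  · -- antitone: f S Istar / Istar ≤ f S J / J
    have hanti := (H2a S hS.le).2 (Set.mem_Ioi.mpr hJ) (Set.mem_Ioi.mpr hI) h
    -- f S Istar * J ≤ f S J * Istar
    have hcross : f S Istar * J ≤ f S J * Istar := by
      rw [div_le_div_iff₀ hI hJ] at hanti
      linarith
    have h1 : (J / Istar) * (f S Istar / f S J) ≤ 1 := by
      rw [div_mul_div_comm, div_le_one (by positivity)]
      nlinarith
    have h2 : 0 ≤ f S J / f S Istar := by positivity
    have h3 : 0 ≤ J / Istar := by positivity
    linarith
  · -- monotone in I : f S Istar ≤ f S J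
    have hmono := H1b S hS.le (Set.mem_Ioi.mpr hI) (Set.mem_Ioi.mpr hJ) h
    have h1 : f S Istar / f S J ≤ 1 := by
      rw [div_le_one hB]; exact hmono
    have h2 : (1:ℝ) ≤ f S J / f S Istar := by
      rw [le_div_iff₀ hA]; simpa using hmono
    have h3 : 0 ≤ J / Istar := by positivity
    have h4 : (J / Istar) * (f S Istar / f S J) ≤ J / Istar := by
      nlinarith
    linarith
end

section
/- Assume hypotheses (H1) and (H2). If R₀ ≤ 1, then H(I) < 0 for every I with 0 < I ≤ I_max; consequently, the system has no endemic equilibrium when R₀ ≤ 1. -/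
/-!
Along the equilibrium curve `S(I) = S₀ - A I / (μ α)` the susceptible level stays strictly below
`S₀` on `(0, I_max]`, so strict monotonicity of `f` in `S` gives `f(S(I), I) / I < f(S₀, I) / I`.
Since `I ↦ f(S₀, I) / I` decreases towards its limit `k(S₀)` as `I → 0⁺`, it is bounded by `k(S₀)`,
and `R₀ ≤ 1` reads `β k(S₀) ≤ A / α`; hence `H < 0`. An endemic equilibrium would lie on that curve
with `H(I*) = 0`.
-/

open Filter Set Topology

theorem AntitoneOn.le_of_tendsto_nhdsGT {α β : Type*} [LinearOrder α] [TopologicalSpace α]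
    [OrderTopology α] [Preorder β] [TopologicalSpace β] [OrderClosedTopology β]
    {g : α → β} {a x : α} {L : β} [(𝓝[>] a).NeBot] (hg : AntitoneOn g (Ioi a))
    (hlim : Tendsto g (𝓝[>] a) (𝓝 L)) (hx : a < x) : g x ≤ L := by
  refine ge_of_tendsto hlim ?_
  filter_upwards [Ioo_mem_nhdsGT hx] with y hy
  exact hg hy.1 (hy.1.trans hy.2) hy.2.le

lemma susceptible_nonneg_of_le_max {b μ α A I : ℝ} (hμ : 0 < μ) (hα : 0 < α) (hA : 0 < A)
    (hI : I ≤ b * α / A) : 0 ≤ b / μ - A * I / (μ * α) := by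
  rw [le_div_iff₀ hA] at hI
  rw [sub_nonneg, div_le_div_iff₀ (by positivity) hμ]
  nlinarith

/-- The equilibrium equations of the model, with `p = μ + α`, `q = μ + c + γ`, `F = β f(S, I)`. -/
lemma endemic_equilibrium_on_curve {b μ α p q S E I F : ℝ} (hμ : 0 < μ) (hα : 0 < α)
    (hp : 0 < p) (hq : 0 < q) (hS : 0 < S) (hI : 0 < I)
    (h₁ : b = μ * S + F) (h₂ : F = p * E) (h₃ : α * E = q * I) :
    S = b / μ - p * q * I / (μ * α) ∧ I ≤ b * α / (p * q) ∧ F / I = p * q / α := by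
  have hF : α * F = p * (q * I) := by rw [h₂, ← h₃]; ring
  refine ⟨?_, ?_, ?_⟩
  · rw [div_sub_div _ _ hμ.ne' (by positivity), eq_div_iff (by positivity)]
    linear_combination (-(μ * α)) * h₁ - μ * hF
  · rw [le_div_iff₀ (by positivity)]
    nlinarith [mul_pos hμ hS]
  · rw [div_eq_div_iff hI.ne' hα.ne']
    linear_combination hF

lemma incidence_ratio_lt_of_R₀_le_one {b μ β α A : ℝ} {f : ℝ → ℝ → ℝ} {k : ℝ → ℝ}
    (hμ : 0 < μ) (hβ : 0 < β) (hα : 0 < α) (hA : 0 < A)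
    (hf_strictMono : ∀ I > (0:ℝ), StrictMonoOn (fun S => f S I) (Ici 0))
    (hf_le_k : ∀ I > (0:ℝ), f (b / μ) I / I ≤ k (b / μ))
    (hR₀ : β * α * k (b / μ) / A ≤ 1) {I : ℝ} (hI : 0 < I) (hI_max : I ≤ b * α / A) :
    β * f (b / μ - A * I / (μ * α)) I / I - A / α < 0 := by
  have hS_nonneg := susceptible_nonneg_of_le_max hμ hα hA hI_max
  have hS_lt : b / μ - A * I / (μ * α) < b / μ := sub_lt_self _ (by positivity)
  have hf_lt := hf_strictMono I hI hS_nonneg (mem_Ici.2 (hS_nonneg.trans hS_lt.le)) hS_lt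
  have hβk : β * k (b / μ) ≤ A / α := by
    rw [div_le_one hA] at hR₀
    rw [le_div_iff₀ hα]
    linarith
  have hratio_le := hf_le_k I hI
  rw [sub_neg]
  calc β * f (b / μ - A * I / (μ * α)) I / I
      < β * (f (b / μ) I / I) := by
        rw [mul_div_assoc]
        exact mul_lt_mul_of_pos_left (div_lt_div_of_pos_right hf_lt hI) hβ
    _ ≤ β * k (b / μ) := by gcongr
    _ ≤ A / α := hβk

theorem stmt_13_general
    (b μ β α c γ : ℝ)
    (hb : 0 < b) (hμ : 0 < μ) (hβ : 0 < β) (hα : 0 < α) (hc : 0 < c) (hγ : 0 < γ)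
    (f : ℝ → ℝ → ℝ) (k : ℝ → ℝ)
    -- (H1)
    (H1a : ∀ I > (0:ℝ), StrictMonoOn (fun S => f S I) (Set.Ici (0:ℝ)))
    -- (H2)
    (H2a : ∀ S ≥ (0:ℝ), BddAbove ((fun I => f S I / I) '' Set.Ioi (0:ℝ)) ∧
      AntitoneOn (fun I => f S I / I) (Set.Ioi (0:ℝ)))
    (H2b : ∀ S ≥ (0:ℝ), Filter.Tendsto (fun I => f S I / I)
      (nhdsWithin 0 (Set.Ioi 0)) (nhds (k S)))
    -- R₀ ≤ 1
    (hR0 : β * α * k (b / μ) / ((μ + α) * (μ + c + γ)) ≤ 1) :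
    (∀ I : ℝ, 0 < I → I ≤ b * α / ((μ + α) * (μ + c + γ)) →
      β * f (b / μ - (μ + α) * (μ + c + γ) * I / (μ * α)) I / I
        - (μ + α) * (μ + c + γ) / α < 0) ∧
    ¬ ∃ Sstar Estar Istar : ℝ,
        0 < Sstar ∧ 0 < Estar ∧ 0 < Istar ∧
        b = μ * Sstar + β * f Sstar Istar ∧
        β * f Sstar Istar = (μ + α) * Estar ∧
        α * Estar = (μ + c + γ) * Istar := by
  have hS₀ : (0:ℝ) ≤ b / μ := by positivity
  have hf_le_k : ∀ I > (0:ℝ), f (b / μ) I / I ≤ k (b / μ) := fun I hI =>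
    (H2a _ hS₀).2.le_of_tendsto_nhdsGT (H2b _ hS₀) hI
  have hH_neg := fun I (hI : 0 < I) => incidence_ratio_lt_of_R₀_le_one hμ hβ hα
    (by positivity) H1a hf_le_k hR0 hI
  refine ⟨hH_neg, ?_⟩
  rintro ⟨S, E, I, hS, -, hI, h₁, h₂, h₃⟩
  obtain ⟨hS_eq, hI_max, hratio⟩ :=
    endemic_equilibrium_on_curve hμ hα (by positivity) (by positivity) hS hI h₁ h₂ h₃
  have := hH_neg I hI hI_max
  rw [← hS_eq, hratio, sub_self] at this
  exact lt_irrefl 0 this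

/-- If R₀ ≤ 1 then H < 0 on (0, I_max], hence no endemic equilibrium. -/
theorem stmt_13
    (b μ β α c γ : ℝ)
    (hb : 0 < b) (hμ : 0 < μ) (hβ : 0 < β) (hα : 0 < α) (hc : 0 < c) (hγ : 0 < γ)
    (f : ℝ → ℝ → ℝ) (k : ℝ → ℝ)
    (hf_nonneg : ∀ S ≥ (0:ℝ), ∀ I ≥ (0:ℝ), 0 ≤ f S I)
    (hf0S : ∀ I ≥ (0:ℝ), f 0 I = 0)
    (hf0I : ∀ S ≥ (0:ℝ), f S 0 = 0)
    -- (H1)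
    (H1a : ∀ I > (0:ℝ), StrictMonoOn (fun S => f S I) (Set.Ici (0:ℝ)))
    (H1b : ∀ S ≥ (0:ℝ), MonotoneOn (fun I => f S I) (Set.Ioi (0:ℝ)))
    -- (H2)
    (H2a : ∀ S ≥ (0:ℝ), BddAbove ((fun I => f S I / I) '' Set.Ioi (0:ℝ)) ∧
      AntitoneOn (fun I => f S I / I) (Set.Ioi (0:ℝ)))
    (H2b : ∀ S ≥ (0:ℝ), Filter.Tendsto (fun I => f S I / I)
      (nhdsWithin 0 (Set.Ioi 0)) (nhds (k S)))
    (hk_cont : ContinuousOn k (Set.Ici (0:ℝ)))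
    (hk_mono : MonotoneOn k (Set.Ici (0:ℝ)))
    -- R₀ ≤ 1
    (hR0 : β * α * k (b / μ) / ((μ + α) * (μ + c + γ)) ≤ 1) :
    (∀ I : ℝ, 0 < I → I ≤ b * α / ((μ + α) * (μ + c + γ)) →
      β * f (b / μ - (μ + α) * (μ + c + γ) * I / (μ * α)) I / I
        - (μ + α) * (μ + c + γ) / α < 0) ∧
    ¬ ∃ Sstar Estar Istar : ℝ,
        0 < Sstar ∧ 0 < Estar ∧ 0 < Istar ∧
        b = μ * Sstar + β * f Sstar Istar ∧
        β * f Sstar Istar = (μ + α) * Estar ∧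
        α * Estar = (μ + c + γ) * Istar :=
  stmt_13_general b μ β α c γ hb hμ hβ hα hc hγ f k H1a H2a H2b hR0
end

section
/- Consider the bilinear incidence f(S,I) = S·I, and set R₀ := β·b·α/(μ·(μ+α)·(μ+c+γ)) and A := (μ+α)(μ+c+γ). If R₀ > 1, then the unique endemic equilibrium is given explicitly by I* = (μ/β)·(R₀ − 1), S* = A/(β·α), E* = (μ+c+γ)·I*/α; that is, these values are positive, satisfy 0 < I* < b·α/A, and satisfy the equilibrium equations b = μ·S* + β·S*·I*, β·S*·I* = (μ+α)·E*, and α·E* = (μ+c+γ)·I*. -/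
/-- For the bilinear incidence f(S,I) = S·I, if R₀ > 1 then the
unique endemic equilibrium is I* = (μ/β)(R₀ − 1), S* = A/(β·α),
E* = (μ+c+γ)·I*/α. -/
theorem stmt_15
    (b μ β α c γ : ℝ)
    (hb : 0 < b) (hμ : 0 < μ) (hβ : 0 < β) (hα : 0 < α) (hc : 0 < c) (hγ : 0 < γ)
    (hR0 : 1 < β * b * α / (μ * (μ + α) * (μ + c + γ))) :
    (0 < (μ / β) * (β * b * α / (μ * (μ + α) * (μ + c + γ)) - 1) ∧
     0 < (μ + α) * (μ + c + γ) / (β * α) ∧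
     0 < (μ + c + γ) * ((μ / β) * (β * b * α / (μ * (μ + α) * (μ + c + γ)) - 1)) / α ∧
     (μ / β) * (β * b * α / (μ * (μ + α) * (μ + c + γ)) - 1)
        < b * α / ((μ + α) * (μ + c + γ)) ∧
     b = μ * ((μ + α) * (μ + c + γ) / (β * α))
          + β * ((μ + α) * (μ + c + γ) / (β * α))
            * ((μ / β) * (β * b * α / (μ * (μ + α) * (μ + c + γ)) - 1)) ∧
     β * ((μ + α) * (μ + c + γ) / (β * α))
          * ((μ / β) * (β * b * α / (μ * (μ + α) * (μ + c + γ)) - 1))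
        = (μ + α) * ((μ + c + γ)
            * ((μ / β) * (β * b * α / (μ * (μ + α) * (μ + c + γ)) - 1)) / α) ∧
     α * ((μ + c + γ)
            * ((μ / β) * (β * b * α / (μ * (μ + α) * (μ + c + γ)) - 1)) / α)
        = (μ + c + γ) * ((μ / β) * (β * b * α / (μ * (μ + α) * (μ + c + γ)) - 1)))
    ∧
    (∀ Sstar Estar Istar : ℝ,
      0 < Sstar → 0 < Estar → 0 < Istar →
      b = μ * Sstar + β * Sstar * Istar →
      β * Sstar * Istar = (μ + α) * Estar →
      α * Estar = (μ + c + γ) * Istar →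
      Sstar = (μ + α) * (μ + c + γ) / (β * α) ∧
      Estar = (μ + c + γ)
          * ((μ / β) * (β * b * α / (μ * (μ + α) * (μ + c + γ)) - 1)) / α ∧
      Istar = (μ / β) * (β * b * α / (μ * (μ + α) * (μ + c + γ)) - 1)) := by
  have hμα : 0 < μ + α := by linarith
  have hμcγ : 0 < μ + c + γ := by linarith
  have hI : 0 < (μ / β) * (β * b * α / (μ * (μ + α) * (μ + c + γ)) - 1) := by
    apply mul_pos (div_pos hμ hβ); linarith
  constructor
  · refine ⟨hI, div_pos (mul_pos hμα hμcγ) (mul_pos hβ hα),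
      div_pos (mul_pos hμcγ hI) hα, ?_, ?_, ?_, ?_⟩
    · have key : μ / β * (β * b * α / (μ * (μ + α) * (μ + c + γ)) - 1)
          = (β * b * α - μ * ((μ + α) * (μ + c + γ))) / (β * ((μ + α) * (μ + c + γ))) := by
        field_simp
      rw [key, div_lt_div_iff₀ (by positivity) (by positivity)]
      nlinarith [mul_pos (mul_pos hμ hμα) hμcγ, mul_pos hμα hμcγ]
    · field_simp
      ring
    · field_simp
    · field_simp
  · intro S E I hS hE hI' h1 h2 h3
    have hSv : S = (μ + α) * (μ + c + γ) / (β * α) := by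
      have hEv : E = (μ + c + γ) * I / α := by field_simp; linarith
      rw [hEv] at h2
      field_simp at h2 ⊢
      nlinarith [h2]
    subst hSv
    have hIv : I = (μ / β) * (β * b * α / (μ * (μ + α) * (μ + c + γ)) - 1) := by
      field_simp at h1 ⊢
      nlinarith [h1]
    refine ⟨rfl, ?_, hIv⟩
    rw [hIv] at h3
    rw [eq_div_iff hα.ne']
    linarith [h3]
end
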